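/- arXiv:1909.13539 — 5 statements merged into one kernel-verified Lean document; each statement's English description precedes it below -/
import Mathlib

section
/- Let G be a finite simple graph on n vertices with exactly 3n-6 edges and minimum degree at least 4, containing at least 2n-4 triangles. Then for every vertex x of G, the sum of degrees of neighbors of x is at most 3·d(x) + 2n - 8. -/
open SimpleGraph Finset

variable {V W : Type*}

/-- A path on 4 distinct vertices `a b c d` in `G`. -/
def IsPath4 (G : SimpleGraph V) (a b c d : V) : Prop :=
  G.Adj a b ∧ G.Adj b c ∧ G.Adj c d ∧
    a ≠ b ∧ a ≠ c ∧ a ≠ d ∧ b ≠ c ∧ b ≠ d ∧ c ≠ d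

/-- The number of paths on 4 vertices (3-paths) of `G`, counted as subgraphs,
i.e. ordered labelled paths identified with their reversals. -/
noncomputable def pathCount4 (G : SimpleGraph V) : ℕ :=
  {p : V × V × V × V | IsPath4 G p.1 p.2.1 p.2.2.1 p.2.2.2}.ncard / 2

/-- An embedding of a subdivision of `H` into `G`: branch vertices joined by
internally disjoint paths. -/
structure SubdivEmb (H : SimpleGraph W) (G : SimpleGraph V) where
  branch : W ↪ V
  walk : ∀ a b, H.Adj a b → G.Walk (branch a) (branch b)
  walk_isPath : ∀ a b (h : H.Adj a b), (walk a b h).IsPath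
  branch_mem : ∀ a b (h : H.Adj a b) (w : W),
    branch w ∈ (walk a b h).support → w = a ∨ w = b
  disjoint : ∀ a b c d (h₁ : H.Adj a b) (h₂ : H.Adj c d), s(a, b) ≠ s(c, d) →
    ∀ v, v ∈ (walk a b h₁).support → v ∈ (walk c d h₂).support →
      ∃ w, (w = a ∨ w = b) ∧ (w = c ∨ w = d) ∧ v = branch w

/-- A graph is planar iff it contains no subdivision of `K₅` nor of `K₃,₃`
(Kuratowski's theorem). -/
def IsPlanar (G : SimpleGraph V) : Prop :=
  IsEmpty (SubdivEmb (⊤ : SimpleGraph (Fin 5)) G) ∧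
  IsEmpty (SubdivEmb (completeBipartiteGraph (Fin 3) (Fin 3)) G)

/-- The graph `Fₙ`: a path on `n - 2` vertices (`0, …, n-3`) plus two adjacent
vertices (`n-2` and `n-1`), each joined to every vertex of the path. -/
def Fgraph (n : ℕ) : SimpleGraph (Fin n) :=
  SimpleGraph.fromRel (fun a b =>
    (b.val = a.val + 1 ∧ b.val < n - 2) ∨
    (a.val < n - 2 ∧ n - 2 ≤ b.val) ∨
    (n - 2 ≤ a.val ∧ n - 2 ≤ b.val))

/-- The number of triangles of `G`. -/
noncomputable def triangleCount (G : SimpleGraph V) : ℕ :=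
  {s : Finset V | G.IsNClique 3 s}.ncard

/-- In an `n`-vertex graph with `3n - 6` edges, minimum degree at
least 4 and at least `2n - 4` triangles, for every vertex `x` the sum of the
degrees of its neighbors is at most `3 d(x) + 2n - 8`. -/
theorem sum_degree_neighbors_le {V : Type*} [Fintype V] [DecidableEq V]
    (G : SimpleGraph V) [DecidableRel G.Adj] (n : ℕ) (hn : Fintype.card V = n)
    (hedges : (G.edgeFinset.card : ℤ) = 3 * n - 6)
    (hmin : ∀ v : V, 4 ≤ G.degree v)
    (htri : 2 * (n : ℤ) - 4 ≤ ((G.cliqueFinset 3).card : ℤ)) :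
    ∀ x : V, (∑ y ∈ G.neighborFinset x, (G.degree y : ℤ)) ≤
      3 * G.degree x + 2 * n - 8 := by
  intro x
  have hsum : ∑ v : V, (G.degree v : ℤ) = 2 * (G.edgeFinset.card : ℤ) := by
    have := G.sum_degrees_eq_twice_card_edges
    exact_mod_cast congrArg (Nat.cast : ℕ → ℤ) this
  set N := G.neighborFinset x with hN
  have hxN : x ∉ N := by simp [hN]
  set R := (univ : Finset V) \ (insert x N) with hRdef
  have hsplit : ∑ v : V, (G.degree v : ℤ)
      = (∑ v ∈ R, (G.degree v : ℤ)) + ((G.degree x : ℤ) + ∑ y ∈ N, (G.degree y : ℤ)) := by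
    rw [← Finset.sum_sdiff (Finset.subset_univ (insert x N)), Finset.sum_insert hxN]
  have hcard_ins : (insert x N).card = G.degree x + 1 := by
    rw [Finset.card_insert_of_notMem hxN, hN]
    rfl
  have hle : (insert x N).card ≤ Fintype.card V := Finset.card_le_univ _
  have hRcard : (R.card : ℤ) = (n : ℤ) - (G.degree x + 1) := by
    rw [hRdef, Finset.card_sdiff_of_subset (Finset.subset_univ _), Finset.card_univ]
    rw [Nat.cast_sub hle, hn, hcard_ins]
    push_cast
    ring
  have hRsum : 4 * (R.card : ℤ) ≤ ∑ v ∈ R, (G.degree v : ℤ) := by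
    calc 4 * (R.card : ℤ) = ∑ _v ∈ R, (4 : ℤ) := by
          rw [Finset.sum_const, nsmul_eq_mul]; ring
      _ ≤ ∑ v ∈ R, (G.degree v : ℤ) := by
          apply Finset.sum_le_sum
          intro v _
          exact_mod_cast hmin v
  linarith [hsum, hsplit, hRsum, hRcard, hedges]
end

section
/- Let G be an n-vertex simple graph with at most 3n-6 edges, minimum degree at least 4, at least 2n-4 triangles, and such that for every vertex x the sum of the degrees of its neighbors is at most 3d(x)+2n-8. Then the number of paths on 4 vertices in G is strictly less than 7n^2 - 36n + 50. -/
open SimpleGraph Finset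

variable {V W : Type*}

/-! Every non-backtracking walk `a x y b` of length 3 is either a path on four vertices
(`a ≠ b`) or an ordered triangle (`a = b`). Hence `2 P + 6 T = ∑_{x ~ y} (d x - 1) (d y - 1)`,
where `P` counts the paths and `T` the triangles. Writing `S x` for the sum of the degrees of the
neighbours of `x`, the right-hand side is `∑ₓ (d x - 1) (S x - d x)`; since `∑ₓ S x = ∑ₓ (d x)²`
and `d x ≥ 4`, the bound on `S x` turns it into `∑ₓ w (d x)` for an explicit convex quadratic `w`.
Bounding `w` by its chord over the range of possible degrees and using `∑ₓ d x ≤ 6n - 12` gives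
the claim, provided no vertex is adjacent to all others. If `u` is such a vertex, the bound on
`S x` forces `d x ≤ n - 3` for every other `x`, which again suffices for `n ≥ 8`; for `n = 7` one
needs an eleventh triangle: `G - u` is `3`-regular on six vertices, and once it contains one
triangle (forced by `T ≥ 10`) the remaining three vertices form another. -/

lemma Finset.card_distinct_triples {α : Type*} [DecidableEq α] (s : Finset α) :
    #{p ∈ s ×ˢ s ×ˢ s | p.1 ≠ p.2.1 ∧ p.1 ≠ p.2.2 ∧ p.2.1 ≠ p.2.2} =
      #s * ((#s - 1) * (#s - 2)) := by
  rw [card_eq_sum_card_fiberwise (f := Prod.fst) (t := s) (fun p hp => by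
    simp only [mem_coe, mem_filter, mem_product] at hp; exact hp.1.1),
    ← smul_eq_mul, ← sum_const]
  refine sum_congr rfl fun x hx => ?_
  rw [show (#s - 1) * (#s - 2) = #(s.erase x).offDiag by
    rw [offDiag_card, card_erase_of_mem hx, ← Nat.mul_sub_one, Nat.sub_sub]]
  refine card_nbij' Prod.snd (fun q => (x, q)) ?_ ?_ ?_ ?_
  · rintro ⟨x', y, z⟩ h
    simp only [mem_coe, mem_filter, mem_product] at h
    obtain ⟨⟨⟨-, hy, hz⟩, hxy, hxz, hyz⟩, rfl⟩ := h
    simp [hy, hz, hyz, Ne.symm hxy, Ne.symm hxz]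
  · rintro ⟨y, z⟩ h
    simp only [coe_offDiag, Set.mem_offDiag, mem_coe, mem_erase] at h
    obtain ⟨⟨hyx, hy⟩, ⟨hzx, hz⟩, hyz⟩ := h
    simp [hx, hy, hz, hyz, Ne.symm hyx, Ne.symm hzx]
  · rintro ⟨x', y, z⟩ h
    simp only [coe_filter, Set.mem_ofPred_eq] at h
    simp [h.2]
  · intro _ _
    rfl

-- `(d - 4) * (c - d) + 6 * d ^ 2 - 15 * d` in factored form: what a vertex of degree `d ≥ 4`
-- contributes to the bound on non-backtracking 3-walks when the degrees of its neighbours sum to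
-- at most `3 * d + c`.
def walkWeight (c d : ℤ) : ℤ := 36 + (d - 4) * (5 * d + c + 9)

lemma sum_walkWeight_le {ι : Type*} (s : Finset ι) (d : ι → ℤ) (c D : ℤ)
    (hd : ∀ i ∈ s, 4 ≤ d i ∧ d i ≤ D) :
    ∑ i ∈ s, walkWeight c (d i) ≤ 36 * #s + (5 * D + c + 9) * (∑ i ∈ s, d i - 4 * #s) := by
  calc ∑ i ∈ s, walkWeight c (d i) ≤ ∑ i ∈ s, (36 + (d i - 4) * (5 * D + c + 9)) := by
        refine sum_le_sum fun i hi => ?_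
        obtain ⟨h4, hD⟩ := hd i hi
        simp only [walkWeight]
        nlinarith
    _ = 36 * #s + (5 * D + c + 9) * (∑ i ∈ s, d i - 4 * #s) := by
        simp only [sum_add_distrib, sum_const, nsmul_eq_mul, ← sum_mul, sum_sub_distrib]
        ring

namespace SimpleGraph

section

variable [Fintype V] (G : SimpleGraph V) [DecidableRel G.Adj]

def orderedTriangles : Finset (V × V × V) :=
  {p | G.Adj p.1 p.2.1 ∧ G.Adj p.2.1 p.2.2 ∧ G.Adj p.2.2 p.1}

variable {G} in
@[simp] lemma mem_orderedTriangles {x y z : V} :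
    (x, y, z) ∈ G.orderedTriangles ↔ G.Adj x y ∧ G.Adj y z ∧ G.Adj z x := by
  simp [orderedTriangles]

variable [DecidableEq V]

instance (a b c d : V) : Decidable (IsPath4 G a b c d) := by
  unfold IsPath4; infer_instance

def path4Tuples : Finset (V × V × V × V) :=
  {p | IsPath4 G p.1 p.2.1 p.2.2.1 p.2.2.2}

def nonbacktrackingWalks3 : Finset (V × V × V × V) :=
  {p | G.Adj p.1 p.2.1 ∧ G.Adj p.2.1 p.2.2.1 ∧ G.Adj p.2.2.1 p.2.2.2 ∧
    p.1 ≠ p.2.2.1 ∧ p.2.1 ≠ p.2.2.2}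

variable {G} in
@[simp] lemma mem_path4Tuples {a x y b : V} :
    (a, x, y, b) ∈ G.path4Tuples ↔ IsPath4 G a x y b := by
  simp [path4Tuples]

variable {G} in
@[simp] lemma mem_nonbacktrackingWalks3 {a x y b : V} :
    (a, x, y, b) ∈ G.nonbacktrackingWalks3 ↔
      G.Adj a x ∧ G.Adj x y ∧ G.Adj y b ∧ a ≠ y ∧ x ≠ b := by
  simp [nonbacktrackingWalks3]

lemma pathCount4_eq_card_path4Tuples_div_two : pathCount4 G = #G.path4Tuples / 2 := by
  rw [pathCount4, ← Set.ncard_coe_finset, path4Tuples, coe_filter]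
  simp

lemma card_path4Tuples_add_card_orderedTriangles :
    #G.path4Tuples + #G.orderedTriangles = #G.nonbacktrackingWalks3 := by
  have hpaths : {p ∈ G.nonbacktrackingWalks3 | p.1 ≠ p.2.2.2} = G.path4Tuples := by
    ext ⟨a, x, y, b⟩
    simp only [mem_filter, mem_nonbacktrackingWalks3, mem_path4Tuples, IsPath4]
    constructor
    · rintro ⟨⟨hax, hxy, hyb, hay, hxb⟩, hab⟩
      exact ⟨hax, hxy, hyb, hax.ne, hay, hab, hxy.ne, hxb, hyb.ne⟩
    · rintro ⟨hax, hxy, hyb, -, hay, hab, -, hxb, -⟩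
      exact ⟨⟨hax, hxy, hyb, hay, hxb⟩, hab⟩
  have htriangles :
      #{p ∈ G.nonbacktrackingWalks3 | ¬p.1 ≠ p.2.2.2} = #G.orderedTriangles := by
    refine card_nbij' (fun p => (p.2.1, p.2.2.1, p.1)) (fun q => (q.2.2, q.1, q.2.1, q.2.2))
      ?_ ?_ ?_ ?_
    · rintro ⟨a, x, y, b⟩ h
      simp only [coe_filter, Set.mem_ofPred_eq, mem_nonbacktrackingWalks3, not_not] at h
      obtain ⟨⟨hax, hxy, hyb, -, -⟩, rfl⟩ := h
      exact mem_orderedTriangles.2 ⟨hxy, hyb, hax⟩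
    · rintro ⟨x, y, z⟩ h
      obtain ⟨hxy, hyz, hzx⟩ := mem_orderedTriangles.1 h
      simpa using ⟨hzx, hxy, hyz, hyz.ne', hzx.ne'⟩
    · rintro ⟨a, x, y, b⟩ h
      simp only [coe_filter, Set.mem_ofPred_eq, not_not] at h
      simp [h.2]
    · intro _ _
      rfl
  rw [← card_filter_add_card_filter_not (s := G.nonbacktrackingWalks3) (fun p => p.1 ≠ p.2.2.2),
    hpaths, htriangles]

lemma card_nonbacktrackingWalks3 : #G.nonbacktrackingWalks3 =
    ∑ x, ∑ y ∈ G.neighborFinset x, (G.degree x - 1) * (G.degree y - 1) := by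
  rw [card_eq_sum_card_fiberwise (f := fun p => (p.2.1, p.2.2.1))
    (t := {e : V × V | G.Adj e.1 e.2}) (by rintro ⟨a, x, y, b⟩ h; simp_all),
    sum_finset_product _ univ (fun x => G.neighborFinset x) (by simp)]
  refine sum_congr rfl fun x _ => sum_congr rfl fun y hy => ?_
  rw [mem_neighborFinset] at hy
  rw [← card_neighborFinset_eq_degree, ← card_neighborFinset_eq_degree,
    ← card_erase_of_mem (G.mem_neighborFinset x y |>.mpr hy),
    ← card_erase_of_mem (G.mem_neighborFinset y x |>.mpr hy.symm), ← card_product]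
  refine card_nbij' (fun p => (p.1, p.2.2.2)) (fun q => (q.1, x, y, q.2)) ?_ ?_ ?_ ?_
  · rintro ⟨a, x', y', b⟩ h
    simp only [coe_filter, Set.mem_ofPred_eq, mem_nonbacktrackingWalks3, Prod.mk.injEq] at h
    obtain ⟨⟨hax, -, hyb, hay, hxb⟩, rfl, rfl⟩ := h
    simp [hay, hax.symm, Ne.symm hxb, hyb]
  · rintro ⟨a, b⟩ h
    simp only [coe_product, Set.mem_prod, mem_coe, mem_erase, mem_neighborFinset] at h
    obtain ⟨⟨hay, hxa⟩, hbx, hyb⟩ := h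
    simp [hxa.symm, hy, hyb, hay, Ne.symm hbx]
  · rintro ⟨a, x', y', b⟩ h
    simp only [coe_filter, Set.mem_ofPred_eq, Prod.mk.injEq] at h
    simp [h.2.1, h.2.2]
  · intro _ _
    rfl

lemma card_orderedTriangles : #G.orderedTriangles = 6 * #(G.cliqueFinset 3) := by
  rw [card_eq_sum_card_fiberwise (f := fun p => {p.1, p.2.1, p.2.2}) (t := G.cliqueFinset 3)
    (by
      rintro ⟨x, y, z⟩ h
      obtain ⟨hxy, hyz, hzx⟩ := mem_orderedTriangles.1 h
      simpa [is3Clique_triple_iff] using ⟨hxy, hzx.symm, hyz⟩),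
    sum_const_nat (m := 6) fun s hs => ?_, mul_comm]
  rw [mem_cliqueFinset_iff] at hs
  rw [← show #s * ((#s - 1) * (#s - 2)) = 6 by rw [hs.2], ← card_distinct_triples]
  congr 1
  ext ⟨x, y, z⟩
  simp only [mem_filter, mem_orderedTriangles, mem_product]
  constructor
  · rintro ⟨⟨hxy, hyz, hzx⟩, rfl⟩
    simp [hxy.ne, hyz.ne, hzx.ne']
  · rintro ⟨⟨hx, hy, hz⟩, hxy, hxz, hyz⟩
    refine ⟨⟨hs.1 hx hy hxy, hs.1 hy hz hyz, hs.1 hz hx (Ne.symm hxz)⟩, ?_⟩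
    refine eq_of_subset_of_card_le (by simp [insert_subset_iff, hx, hy, hz]) ?_
    rw [hs.2, card_eq_three.2 ⟨x, y, z, hxy, hxz, hyz, rfl⟩]

lemma card_path4Tuples_add_six_mul_card_cliqueFinset_three :
    (#G.path4Tuples : ℤ) + 6 * #(G.cliqueFinset 3) =
      ∑ x, ∑ y ∈ G.neighborFinset x, ((G.degree x : ℤ) - 1) * ((G.degree y : ℤ) - 1) := by
  have h := G.card_path4Tuples_add_card_orderedTriangles
  rw [card_nonbacktrackingWalks3, card_orderedTriangles] at h
  rw [← Nat.cast_ofNat, ← Nat.cast_mul, ← Nat.cast_add, h]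
  push_cast
  refine sum_congr rfl fun x _ => sum_congr rfl fun y hy => ?_
  have hx : 1 ≤ G.degree x := card_pos.2 ⟨y, hy⟩
  have hy : 1 ≤ G.degree y :=
    card_pos.2 ⟨x, (G.mem_neighborFinset y x).2 ((G.mem_neighborFinset x y).1 hy).symm⟩
  push_cast [hx, hy]
  rfl

end

section

variable [Fintype V] (G : SimpleGraph V) [DecidableRel G.Adj]

lemma sum_sum_neighborFinset {M : Type*} [AddCommMonoid M] (f : V → M) :
    ∑ x, ∑ y ∈ G.neighborFinset x, f y = ∑ y, G.degree y • f y := by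
  rw [sum_comm' (t' := univ) (s' := fun y => G.neighborFinset y) (by simp [adj_comm])]
  simp [card_neighborFinset_eq_degree]

lemma sum_sum_neighborFinset_le_sum_walkWeight (c : ℤ) (hmin : ∀ v, 4 ≤ G.degree v)
    (hsum : ∀ x, ∑ y ∈ G.neighborFinset x, (G.degree y : ℤ) ≤ 3 * G.degree x + c) :
    ∑ x, ∑ y ∈ G.neighborFinset x, ((G.degree x : ℤ) - 1) * ((G.degree y : ℤ) - 1) ≤
      ∑ x, walkWeight c (G.degree x) := by
  set S : V → ℤ := fun x => ∑ y ∈ G.neighborFinset x, (G.degree y : ℤ)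
  have hS : ∑ x, S x = ∑ x, (G.degree x : ℤ) ^ 2 := by
    simp only [S, sum_sum_neighborFinset, nsmul_eq_mul, sq]
  -- `(d - 1) (S - d) = (d - 4) (S - 4 d) + 3 S + 3 d² - 15 d`: `S` enters with factor `d - 4 ≥ 0`
  calc ∑ x, ∑ y ∈ G.neighborFinset x, ((G.degree x : ℤ) - 1) * ((G.degree y : ℤ) - 1)
      = ∑ x, (((G.degree x : ℤ) - 4) * (S x - 4 * G.degree x) - 15 * G.degree x
          + 3 * G.degree x ^ 2) + 3 * ∑ x, S x := by
        rw [mul_sum, ← sum_add_distrib]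
        refine sum_congr rfl fun x _ => ?_
        simp only [S, ← mul_sum, sum_sub_distrib, sum_const, card_neighborFinset_eq_degree,
          nsmul_eq_mul, mul_one]
        ring
    _ ≤ ∑ x, walkWeight c (G.degree x) := by
        rw [hS, mul_sum, ← sum_add_distrib]
        refine sum_le_sum fun x _ => ?_
        have h4 : (4 : ℤ) ≤ G.degree x := by exact_mod_cast hmin x
        have := mul_le_mul_of_nonneg_left
          (by linarith [hsum x] : S x - 4 * G.degree x ≤ c - G.degree x)
          (by linarith : (0 : ℤ) ≤ G.degree x - 4)
        simp only [walkWeight]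
        nlinarith

lemma sum_walkWeight_le_of_forall_not_isUniversal {n : ℕ} (hn : Fintype.card V = n)
    (hn2 : 2 ≤ n) (hmin : ∀ v, 4 ≤ G.degree v) (huniv : ∀ u, ¬G.IsUniversal u)
    (hdeg : ∑ x, (G.degree x : ℤ) ≤ 6 * n - 12) :
    ∑ x, walkWeight (2 * n - 8) (G.degree x) ≤ 14 * n ^ 2 - 66 * n + 108 := by
  have hle : ∀ x ∈ univ, 4 ≤ (G.degree x : ℤ) ∧ (G.degree x : ℤ) ≤ n - 2 := fun x _ => by
    have := (G.degree_lt_card_sub_one x).2 (huniv x)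
    have := hmin x
    rw [hn] at *
    omega
  have := sum_walkWeight_le univ (fun x => (G.degree x : ℤ)) (2 * n - 8) (n - 2) hle
  rw [card_univ, hn] at this
  nlinarith [mul_le_mul_of_nonneg_left (by linarith : ∑ x, (G.degree x : ℤ) - 4 * n ≤ 2 * n - 12)
    (by linarith : (0 : ℤ) ≤ 7 * n - 9)]

variable [DecidableEq V]

lemma two_mul_pathCount4_add_le_sum_walkWeight (c : ℤ) (hmin : ∀ v, 4 ≤ G.degree v)
    (hsum : ∀ x, ∑ y ∈ G.neighborFinset x, (G.degree y : ℤ) ≤ 3 * G.degree x + c) :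
    2 * (pathCount4 G : ℤ) + 6 * #(G.cliqueFinset 3) ≤ ∑ x, walkWeight c (G.degree x) := by
  have h2 : 2 * pathCount4 G ≤ #G.path4Tuples := by
    rw [pathCount4_eq_card_path4Tuples_div_two]
    exact Nat.mul_div_le _ 2
  have h2' : 2 * (pathCount4 G : ℤ) ≤ #G.path4Tuples := by exact_mod_cast h2
  linarith [G.card_path4Tuples_add_six_mul_card_cliqueFinset_three,
    G.sum_sum_neighborFinset_le_sum_walkWeight c hmin hsum]

lemma degree_add_mul_le_sum_degree_neighborFinset (δ : ℤ) (hmin : ∀ v, δ ≤ G.degree v)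
    {x u : V} (h : G.Adj x u) :
    G.degree u + δ * (G.degree x - 1) ≤ ∑ y ∈ G.neighborFinset x, (G.degree y : ℤ) := by
  have hu : u ∈ G.neighborFinset x := (G.mem_neighborFinset x u).2 h
  have hx : 1 ≤ G.degree x := card_pos.2 ⟨u, hu⟩
  have hrest := card_nsmul_le_sum ((G.neighborFinset x).erase u) (fun y => (G.degree y : ℤ)) δ
    (fun y _ => hmin y)
  rw [card_erase_of_mem hu, card_neighborFinset_eq_degree, nsmul_eq_mul, Nat.cast_sub hx] at hrest
  rw [← add_sum_erase _ _ hu]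
  push_cast at hrest
  linarith

lemma degree_le_of_isUniversal {n : ℕ} (hn : Fintype.card V = n) (hmin : ∀ v, 4 ≤ G.degree v)
    (hsum : ∀ x, ∑ y ∈ G.neighborFinset x, (G.degree y : ℤ) ≤ 3 * G.degree x + 2 * n - 8)
    {u : V} (hu : G.IsUniversal u) {x : V} (hx : x ≠ u) : (G.degree x : ℤ) ≤ n - 3 := by
  have hdu : (G.degree u : ℤ) = n - 1 := by
    have := hmin u
    rw [(G.degree_eq_card_sub_one u).2 hu, hn] at this ⊢
    omega
  linarith [hsum x, G.degree_add_mul_le_sum_degree_neighborFinset 4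
    (fun v => by exact_mod_cast hmin v) (hu (Ne.symm hx)).symm]

lemma sum_walkWeight_le_of_isUniversal {n : ℕ} (hn : Fintype.card V = n)
    (hmin : ∀ v, 4 ≤ G.degree v)
    (hsum : ∀ x, ∑ y ∈ G.neighborFinset x, (G.degree y : ℤ) ≤ 3 * G.degree x + 2 * n - 8)
    {u : V} (hu : G.IsUniversal u) (hdeg : ∑ x, (G.degree x : ℤ) ≤ 6 * n - 12) :
    ∑ x, walkWeight (2 * n - 8) (G.degree x) ≤ 14 * n ^ 2 - 66 * n + 118 := by
  have hdu : (G.degree u : ℤ) = n - 1 := by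
    have := hmin u
    rw [(G.degree_eq_card_sub_one u).2 hu, hn] at this ⊢
    omega
  have hle : ∀ x ∈ univ.erase u, 4 ≤ (G.degree x : ℤ) ∧ (G.degree x : ℤ) ≤ n - 3 :=
    fun x hx => ⟨by exact_mod_cast hmin x,
      G.degree_le_of_isUniversal hn hmin hsum hu (ne_of_mem_erase hx)⟩
  have hcard : (#(univ.erase u) : ℤ) = n - 1 := by
    rw [card_erase_of_mem (mem_univ u), card_univ, hn]
    have := hmin u
    omega
  have hrest := sum_walkWeight_le _ (fun x => (G.degree x : ℤ)) (2 * n - 8) (n - 3) hle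
  rw [hcard] at hrest
  rw [← add_sum_erase _ _ (mem_univ u), hdu] at hdeg ⊢
  have hwu : walkWeight (2 * n - 8) (n - 1) = 36 + (n - 5) * (7 * n - 4) := by
    unfold walkWeight; ring
  rw [hwu]
  nlinarith [mul_le_mul_of_nonneg_left
    (by linarith : ∑ x ∈ univ.erase u, (G.degree x : ℤ) - 4 * (n - 1) ≤ n - 7)
    (by have := hmin u; omega : (0 : ℤ) ≤ 7 * n - 14)]

lemma degree_add_degree_add_two_le_card_add_card_inter {p q : V} (hpq : p ≠ q)
    (h : ¬G.Adj p q) :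
    G.degree p + G.degree q + 2 ≤
      Fintype.card V + #(G.neighborFinset p ∩ G.neighborFinset q) := by
  have hsub : G.neighborFinset p ∪ G.neighborFinset q ⊆ ({p, q} : Finset V)ᶜ := by
    intro y
    simp only [mem_union, mem_neighborFinset, mem_compl, mem_insert, mem_singleton]
    rintro (hy | hy) (rfl | rfl)
    exacts [hy.ne rfl, h hy, h hy.symm, hy.ne rfl]
  have hunion := card_le_card hsub
  rw [card_compl, card_pair hpq] at hunion
  have := card_union_add_card_inter (G.neighborFinset p) (G.neighborFinset q)
  rw [card_neighborFinset_eq_degree, card_neighborFinset_eq_degree] at this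
  have : 2 ≤ Fintype.card V := by
    rw [← card_pair hpq]; exact card_le_univ _
  omega

lemma card_filter_mem_cliqueFinset_three_add_degree {u : V} (hu : G.IsUniversal u) :
    #{s ∈ G.cliqueFinset 3 | u ∈ s} + G.degree u = #G.edgeFinset := by
  have hbij : #{e ∈ G.edgeFinset | u ∉ e} = #{s ∈ G.cliqueFinset 3 | u ∈ s} := by
    refine card_bij (fun e _ => insert u e.toFinset) ?_ ?_ ?_
    · intro e he
      induction e using Sym2.ind with | h x y => ?_
      simp only [mem_filter, mem_edgeFinset, mem_edgeSet, Sym2.mem_iff, not_or] at he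
      obtain ⟨hxy, hux, huy⟩ := he
      rw [Sym2.toFinset_mk_eq, mem_filter, mem_cliqueFinset_iff, is3Clique_triple_iff]
      exact ⟨⟨hu hux, hu huy, hxy⟩, mem_insert_self _ _⟩
    · intro e₁ he₁ e₂ he₂ h
      have hu₁ : u ∉ e₁.toFinset := by simpa using (mem_filter.1 he₁).2
      have hu₂ : u ∉ e₂.toFinset := by simpa using (mem_filter.1 he₂).2
      have h := congrArg (·.erase u) h
      simp only [erase_insert hu₁, erase_insert hu₂] at h
      exact Sym2.ext fun x => by rw [← Sym2.mem_toFinset, h, Sym2.mem_toFinset]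
    · intro s hs
      rw [mem_filter, mem_cliqueFinset_iff] at hs
      have hedge := hs.1.erase_of_mem hs.2
      obtain ⟨x, y, hxy, hs'⟩ := card_eq_two.1 hedge.2
      have hx : x ∈ s.erase u := by simp [hs']
      have hy : y ∈ s.erase u := by simp [hs']
      refine ⟨s(x, y), ?_, ?_⟩
      · simp only [mem_filter, mem_edgeFinset, mem_edgeSet, Sym2.mem_iff, not_or]
        exact ⟨hedge.1 hx hy hxy, (ne_of_mem_erase hx).symm, (ne_of_mem_erase hy).symm⟩
      · rw [Sym2.toFinset_mk_eq, ← hs', insert_erase hs.2]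
  have hinc : #{e ∈ G.edgeFinset | u ∈ e} = G.degree u := by
    rw [← incidenceFinset_eq_filter, card_incidenceFinset_eq_degree]
  rw [← hbij, ← hinc, add_comm, card_filter_add_card_filter_not]

variable {G}

-- Non-adjacent `p, q` outside `insert u s` have three common neighbours, hence one in `s`,
-- and that vertex would have degree at least five.
lemma isNClique_compl_insert_of_card_eq_seven (hV : Fintype.card V = 7) {u : V}
    (hu : G.IsUniversal u) (hd : ∀ x, x ≠ u → G.degree x = 4) {s : Finset V}
    (hs : G.IsNClique 3 s) (hus : u ∉ s) : G.IsNClique 3 (insert u s)ᶜ := by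
  refine ⟨fun p hp q hq hpq => ?_, by rw [card_compl, card_insert_of_notMem hus, hs.2, hV]⟩
  simp only [coe_compl, coe_insert, Set.mem_compl_iff, Set.mem_insert_iff, mem_coe,
    not_or] at hp hq
  by_contra hpq'
  have hcommon := G.degree_add_degree_add_two_le_card_add_card_inter hpq hpq'
  rw [hd p hp.1, hd q hq.1, hV] at hcommon
  obtain ⟨w, hws, hpw, hqw⟩ : ∃ w ∈ s, G.Adj p w ∧ G.Adj q w := by
    by_contra! hno
    have hsub : G.neighborFinset p ∩ G.neighborFinset q ⊆ (insert p (insert q s))ᶜ := by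
      intro y
      simp only [mem_inter, mem_neighborFinset, mem_compl, mem_insert, not_or]
      exact fun ⟨hpy, hqy⟩ => ⟨hpy.ne', hqy.ne', fun hy => hno y hy hpy hqy⟩
    have := card_le_card hsub
    rw [card_compl, card_insert_of_notMem (by simp [hpq, hp.2]), card_insert_of_notMem hq.2,
      hs.2, hV] at this
    omega
  have hsub : insert p (insert q ((insert u s).erase w)) ⊆ G.neighborFinset w := by
    intro y
    simp only [mem_insert, mem_erase, mem_neighborFinset]
    rintro (rfl | rfl | ⟨hyw, rfl | hy⟩)
    exacts [hpw.symm, hqw.symm, (hu hyw).symm, hs.1 hws hy (Ne.symm hyw)]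
  have := card_le_card hsub
  rw [card_insert_of_notMem (by simp [hpq, hp.1, hp.2]),
    card_insert_of_notMem (by simp [hq.1, hq.2]), card_erase_of_mem (mem_insert_of_mem hws),
    card_insert_of_notMem hus, hs.2, card_neighborFinset_eq_degree,
    hd w (by rintro rfl; exact hus hws)] at this
  omega

lemma eleven_le_card_cliqueFinset_three_of_card_eq_seven (hV : Fintype.card V = 7) {u : V}
    (hu : G.IsUniversal u) (hd : ∀ x, x ≠ u → G.degree x = 4)
    (hT : 10 ≤ #(G.cliqueFinset 3)) : 11 ≤ #(G.cliqueFinset 3) := by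
  have hdu : G.degree u = 6 := by rw [(G.degree_eq_card_sub_one u).2 hu, hV]
  have hE : #G.edgeFinset = 15 := by
    have := G.sum_degrees_eq_twice_card_edges
    rw [← add_sum_erase _ _ (mem_univ u), sum_congr rfl fun x hx => hd x (ne_of_mem_erase hx),
      sum_const, smul_eq_mul, card_erase_of_mem (mem_univ u), card_univ, hV, hdu] at this
    omega
  have hthrough := G.card_filter_mem_cliqueFinset_three_add_degree hu
  rw [← card_filter_add_card_filter_not (s := G.cliqueFinset 3) (fun s => u ∈ s)] at hT ⊢
  obtain ⟨s, hs⟩ : {s ∈ G.cliqueFinset 3 | u ∉ s}.Nonempty := card_pos.1 (by omega)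
  rw [mem_filter, mem_cliqueFinset_iff] at hs
  have hR := isNClique_compl_insert_of_card_eq_seven hV hu hd hs.1 hs.2
  have hne : s ≠ (insert u s)ᶜ := by
    obtain ⟨x, hx⟩ := card_pos.1 (hs.1.2 ▸ three_pos : 0 < #s)
    intro h
    have := h ▸ hx
    simp [hx] at this
  have hpair : {s, (insert u s)ᶜ} ⊆ {t ∈ G.cliqueFinset 3 | u ∉ t} := by
    refine insert_subset_iff.2 ⟨mem_filter.2 ⟨mem_cliqueFinset_iff.2 hs.1, hs.2⟩, ?_⟩
    exact singleton_subset_iff.2 (mem_filter.2 ⟨mem_cliqueFinset_iff.2 hR, by simp⟩)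
  have := card_le_card hpair
  rw [card_pair hne] at this
  omega

end

end SimpleGraph

/-- An `n`-vertex graph (`n ≥ 6`) with at most `3n - 6` edges,
minimum degree at least 4, at least `2n - 4` triangles, and satisfying the
neighbor-degree-sum bound, has fewer than `7n² - 36n + 50` paths on 4 vertices. -/
theorem pathCount4_lt_of_minDegree_four {V : Type*} [Fintype V] [DecidableEq V]
    (G : SimpleGraph V) [DecidableRel G.Adj] (n : ℕ) (hn : Fintype.card V = n)
    (hn6 : 6 ≤ n)
    (hedges : (G.edgeFinset.card : ℤ) ≤ 3 * n - 6)
    (hmin : ∀ v : V, 4 ≤ G.degree v)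
    (htri : 2 * (n : ℤ) - 4 ≤ ((G.cliqueFinset 3).card : ℤ))
    (hsum : ∀ x : V, (∑ y ∈ G.neighborFinset x, (G.degree y : ℤ)) ≤
      3 * G.degree x + 2 * n - 8) :
    (pathCount4 G : ℤ) < 7 * n ^ 2 - 36 * n + 50 := by
  have hw := G.two_mul_pathCount4_add_le_sum_walkWeight (2 * n - 8) hmin
    fun x => by linarith [hsum x]
  have hdeg : ∑ x, (G.degree x : ℤ) ≤ 6 * n - 12 := by
    have := G.sum_degrees_eq_twice_card_edges
    zify at this
    linarith
  by_cases huniv : ∃ u, G.IsUniversal u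
  · obtain ⟨u, hu⟩ := huniv
    have hB := G.sum_walkWeight_le_of_isUniversal hn hmin hsum hu hdeg
    have hd : ∀ x, x ≠ u → 4 ≤ (G.degree x : ℤ) ∧ (G.degree x : ℤ) ≤ n - 3 := fun x hx =>
      ⟨by exact_mod_cast hmin x, G.degree_le_of_isUniversal hn hmin hsum hu hx⟩
    obtain ⟨x, hx⟩ := Fintype.exists_ne_of_one_lt_card (by omega) u
    rcases (by have := hd x hx; omega : n = 7 ∨ 8 ≤ n) with rfl | hn8
    · -- for `n = 7` the weight bound alone still allows `141` paths
      have h11 := eleven_le_card_cliqueFinset_three_of_card_eq_seven hn hu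
        (fun x hx => by have := hd x hx; omega) (by omega)
      push_cast at hw hB ⊢
      linarith [(by exact_mod_cast h11 : (11 : ℤ) ≤ #(G.cliqueFinset 3))]
    · linarith [(by exact_mod_cast hn8 : (8 : ℤ) ≤ n)]
  · have hA := G.sum_walkWeight_le_of_forall_not_isUniversal hn (by omega) hmin
      (not_exists.1 huniv) hdeg
    linarith [(by exact_mod_cast hn6 : (6 : ℤ) ≤ n)]
end

section
/- If x₁, x₂, ..., x_n are natural numbers each at least 4, each at most n-1, with sum equal to 6n-12, then the sum of their squares is at most (n-1)² + (n-3)² + 16(n-2). -/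
open SimpleGraph Finset

variable {V W : Type*}

lemma quad_bound (a b y : ℤ) (h1 : a ≤ y) (h2 : y ≤ b) : y ^ 2 ≤ (a + b) * y - a * b := by
  nlinarith [mul_nonneg (sub_nonneg.2 h1) (sub_nonneg.2 h2)]

/-- Convexity bound for the degree sequence. -/
theorem sum_sq_le_of_degree_sequence (n : ℕ) (hn : 6 ≤ n) (x : Fin n → ℕ)
    (h4 : ∀ i, 4 ≤ x i) (hub : ∀ i, x i ≤ n - 1)
    (hsum : ∑ i, x i = 6 * n - 12) :
    ∑ i, (x i) ^ 2 ≤ (n - 1) ^ 2 + (n - 3) ^ 2 + 16 * (n - 2) := by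
  set y : Fin n → ℤ := fun i => (x i : ℤ) with hy
  have hy4 : ∀ i, (4 : ℤ) ≤ y i := by
    intro i; simp only [hy]; exact_mod_cast h4 i
  have hyub : ∀ i, y i ≤ (n : ℤ) - 1 := by
    intro i
    have := hub i
    have hn1 : (1 : ℕ) ≤ n := by omega
    zify [hn1] at this
    exact this
  have hysum : ∑ i, y i = 6 * (n : ℤ) - 12 := by
    have h12 : (12 : ℕ) ≤ 6 * n := by omega
    have : ((∑ i, x i : ℕ) : ℤ) = ((6 * n - 12 : ℕ) : ℤ) := by rw [hsum]
    push_cast [h12] at this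
    simpa [hy] using this
  suffices h : ∑ i, y i ^ 2 ≤ ((n : ℤ) - 1) ^ 2 + ((n : ℤ) - 3) ^ 2 + 16 * ((n : ℤ) - 2) by
    zify [show (1:ℕ) ≤ n by omega, show (3:ℕ) ≤ n by omega, show (2:ℕ) ≤ n by omega]
    convert h using 2 <;> push_cast <;> ring
  obtain ⟨i₀, -, hmax⟩ := Finset.exists_max_image Finset.univ x ⟨⟨0, by omega⟩, Finset.mem_univ _⟩
  have hmaxy : ∀ i, y i ≤ y i₀ := by
    intro i; simp only [hy]; exact_mod_cast hmax i (Finset.mem_univ i)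
  by_cases hM : x i₀ ≤ n - 2
  · -- max is at most n - 2
    have hMy : y i₀ ≤ (n : ℤ) - 2 := by zify [show (2:ℕ) ≤ n by omega] at hM; exact hM
    have step : ∀ i ∈ Finset.univ, y i ^ 2 ≤ (4 + y i₀) * y i - 4 * y i₀ :=
      fun i _ => quad_bound 4 (y i₀) (y i) (hy4 i) (hmaxy i)
    have hb := Finset.sum_le_sum step
    rw [Finset.sum_sub_distrib, ← Finset.mul_sum, hysum, Finset.sum_const,
      Finset.card_univ, Fintype.card_fin, nsmul_eq_mul] at hb
    have hn' : (6 : ℤ) ≤ (n : ℤ) := by exact_mod_cast hn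
    nlinarith [hy4 i₀, mul_nonneg (by linarith : (0:ℤ) ≤ (n:ℤ) - 2 - y i₀)
      (by linarith : (0:ℤ) ≤ (n:ℤ) - 6)]
  · -- max equals n - 1
    have hMy : y i₀ = (n : ℤ) - 1 := by
      have h1 := hub i₀
      have : x i₀ = n - 1 := by omega
      rw [hy]; simp only [this]
      push_cast [show (1:ℕ) ≤ n by omega]
      ring
    have hmem : i₀ ∈ Finset.univ := Finset.mem_univ i₀
    have hsplit : y i₀ + ∑ j ∈ Finset.univ.erase i₀, y j = 6 * (n : ℤ) - 12 := by
      rw [Finset.add_sum_erase _ _ hmem, hysum]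
    have hcard : (Finset.univ.erase i₀).card = n - 1 := by
      rw [Finset.card_erase_of_mem hmem, Finset.card_univ, Fintype.card_fin]
    have hn' : (6 : ℤ) ≤ (n : ℤ) := by exact_mod_cast hn
    -- every other entry is at most n - 3
    have hsmall : ∀ j ∈ Finset.univ.erase i₀, y j ≤ (n : ℤ) - 3 := by
      intro j hj
      have hsplit2 : y j + ∑ k ∈ (Finset.univ.erase i₀).erase j, y k
          = ∑ j ∈ Finset.univ.erase i₀, y j := Finset.add_sum_erase _ _ hj
      have hcard2 : ((Finset.univ.erase i₀).erase j).card = n - 2 := by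
        rw [Finset.card_erase_of_mem hj, hcard]; omega
      have hlow : (n - 2 : ℕ) • (4 : ℤ) ≤ ∑ k ∈ (Finset.univ.erase i₀).erase j, y k := by
        rw [← hcard2]
        exact Finset.card_nsmul_le_sum _ _ _ (fun k _ => hy4 k)
      have hcast : ((n - 2 : ℕ) : ℤ) = (n : ℤ) - 2 := by
        push_cast [show (2:ℕ) ≤ n by omega]; ring
      rw [nsmul_eq_mul, hcast] at hlow
      linarith
    have step : ∀ j ∈ Finset.univ.erase i₀,
        y j ^ 2 ≤ (4 + ((n : ℤ) - 3)) * y j - 4 * ((n : ℤ) - 3) :=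
      fun j hj => quad_bound 4 ((n : ℤ) - 3) (y j) (hy4 j) (hsmall j hj)
    have hb := Finset.sum_le_sum step
    rw [Finset.sum_sub_distrib, ← Finset.mul_sum, Finset.sum_const, hcard] at hb
    have hcast : ((n - 1 : ℕ) : ℤ) = (n : ℤ) - 1 := by
      push_cast [show (1:ℕ) ≤ n by omega]; ring
    rw [nsmul_eq_mul, hcast] at hb
    have htotal : ∑ i, y i ^ 2 = y i₀ ^ 2 + ∑ j ∈ Finset.univ.erase i₀, y j ^ 2 :=
      (Finset.add_sum_erase _ _ hmem).symm
    rw [htotal]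
    nlinarith [hb, hsplit, hMy]
end

section
/- For n ≥ 4, the graph F_n contains exactly 3n - 8 triangles. -/
open SimpleGraph Finset

variable {V W : Type*}

section TriangleCountAux

lemma Fgraph_adj_iff' {n : ℕ} (a b : Fin n) :
    (Fgraph n).Adj a b ↔ (a : ℕ) ≠ (b : ℕ) ∧
      (((b:ℕ) = (a:ℕ) + 1 ∧ (b:ℕ) < n - 2) ∨ ((a:ℕ) = (b:ℕ) + 1 ∧ (a:ℕ) < n - 2) ∨
       n - 2 ≤ (a:ℕ) ∨ n - 2 ≤ (b:ℕ)) := by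
  rw [Fgraph, fromRel_adj]
  simp only [ne_eq, Fin.ext_iff]
  omega

/-- Explicit enumeration of the triangles of `Fgraph n`. -/
def ftri (n : ℕ) (hn : 4 ≤ n) : Fin (n-3) ⊕ Fin (n-3) ⊕ Fin (n-2) → Finset (Fin n)
  | .inl i => {⟨i, by have := i.2; omega⟩, ⟨(i:ℕ)+1, by have := i.2; omega⟩, ⟨n-2, by omega⟩}
  | .inr (.inl i) => {⟨i, by have := i.2; omega⟩, ⟨(i:ℕ)+1, by have := i.2; omega⟩, ⟨n-1, by omega⟩}
  | .inr (.inr i) => {⟨i, by have := i.2; omega⟩, ⟨n-2, by omega⟩, ⟨n-1, by omega⟩}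

lemma ftri_injective (n : ℕ) (hn : 4 ≤ n) : Function.Injective (ftri n hn) := by
  have hn2 : n - 2 < n := by omega
  have hn1 : n - 1 < n := by omega
  rintro (i | i | i) (j | j | j) h <;>
    [skip; skip; skip; skip; skip; skip; skip; skip; skip] <;>
    have hi : (i:ℕ) < n := by omega
  case inl.inl =>
    have hj : (j:ℕ) < n := by have := j.2; omega
    simp only [ftri, Finset.ext_iff, Finset.mem_insert, Finset.mem_singleton,
      Fin.ext_iff, Fin.val_mk] at h
    have h1 := (h ⟨i, hi⟩).mp (Or.inl rfl)
    have h2 := (h ⟨j, hj⟩).mpr (Or.inl rfl)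
    simp only [Fin.val_mk] at h1 h2
    have := i.2; have := j.2
    exact congrArg Sum.inl (Fin.ext (by omega))
  case inl.inr.inl =>
    simp only [ftri, Finset.ext_iff, Finset.mem_insert, Finset.mem_singleton,
      Fin.ext_iff, Fin.val_mk] at h
    have h1 := (h ⟨n-2, hn2⟩).mp (Or.inr (Or.inr rfl))
    simp only [Fin.val_mk] at h1
    have := j.2; omega
  case inl.inr.inr =>
    simp only [ftri, Finset.ext_iff, Finset.mem_insert, Finset.mem_singleton,
      Fin.ext_iff, Fin.val_mk] at h
    have h1 := (h ⟨n-1, hn1⟩).mpr (Or.inr (Or.inr rfl))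
    simp only [Fin.val_mk] at h1
    have := i.2; omega
  case inr.inl.inl =>
    simp only [ftri, Finset.ext_iff, Finset.mem_insert, Finset.mem_singleton,
      Fin.ext_iff, Fin.val_mk] at h
    have h1 := (h ⟨n-1, hn1⟩).mp (Or.inr (Or.inr rfl))
    simp only [Fin.val_mk] at h1
    have := j.2; omega
  case inr.inl.inr.inl =>
    have hj : (j:ℕ) < n := by have := j.2; omega
    simp only [ftri, Finset.ext_iff, Finset.mem_insert, Finset.mem_singleton,
      Fin.ext_iff, Fin.val_mk] at h
    have h1 := (h ⟨i, hi⟩).mp (Or.inl rfl)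
    have h2 := (h ⟨j, hj⟩).mpr (Or.inl rfl)
    simp only [Fin.val_mk] at h1 h2
    have := i.2; have := j.2
    exact congrArg (Sum.inr ∘ Sum.inl) (Fin.ext (by omega))
  case inr.inl.inr.inr =>
    simp only [ftri, Finset.ext_iff, Finset.mem_insert, Finset.mem_singleton,
      Fin.ext_iff, Fin.val_mk] at h
    have h1 := (h ⟨n-2, hn2⟩).mpr (Or.inr (Or.inl rfl))
    simp only [Fin.val_mk] at h1
    have := i.2; omega
  case inr.inr.inl =>
    simp only [ftri, Finset.ext_iff, Finset.mem_insert, Finset.mem_singleton,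
      Fin.ext_iff, Fin.val_mk] at h
    have h1 := (h ⟨n-1, hn1⟩).mp (Or.inr (Or.inr rfl))
    simp only [Fin.val_mk] at h1
    have := j.2; omega
  case inr.inr.inr.inl =>
    simp only [ftri, Finset.ext_iff, Finset.mem_insert, Finset.mem_singleton,
      Fin.ext_iff, Fin.val_mk] at h
    have h1 := (h ⟨n-2, hn2⟩).mp (Or.inr (Or.inl rfl))
    simp only [Fin.val_mk] at h1
    have := j.2; omega
  case inr.inr.inr.inr =>
    simp only [ftri, Finset.ext_iff, Finset.mem_insert, Finset.mem_singleton,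
      Fin.ext_iff, Fin.val_mk] at h
    have h1 := (h ⟨i, hi⟩).mp (Or.inl rfl)
    simp only [Fin.val_mk] at h1
    have := i.2; have := j.2
    exact congrArg (Sum.inr ∘ Sum.inr) (Fin.ext (by omega))

lemma ftri_isClique (n : ℕ) (hn : 4 ≤ n) (x) : (Fgraph n).IsNClique 3 (ftri n hn x) := by
  rcases x with i | i | i <;>
    refine SimpleGraph.is3Clique_triple_iff.mpr ⟨?_, ?_, ?_⟩ <;>
    rw [Fgraph_adj_iff'] <;> have := i.2 <;> simp only [Fin.val_mk, true_and] <;> omega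

lemma ftri_helper1 {n : ℕ} (hn : 4 ≤ n) (a b c : Fin n)
    (h1 : (b:ℕ) = (a:ℕ) + 1) (h2 : (b:ℕ) < n - 2)
    (hc : (c:ℕ) = n-2 ∨ (c:ℕ) = n-1) :
    ∃ x, ftri n hn x = {a, b, c} := by
  rcases hc with hc | hc
  · refine ⟨.inl ⟨(a:ℕ), by omega⟩, ?_⟩
    ext v
    simp only [ftri, Finset.mem_insert, Finset.mem_singleton, Fin.ext_iff, Fin.val_mk]
    omega
  · refine ⟨.inr (.inl ⟨(a:ℕ), by omega⟩), ?_⟩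
    ext v
    simp only [ftri, Finset.mem_insert, Finset.mem_singleton, Fin.ext_iff, Fin.val_mk]
    omega

lemma ftri_helper2 {n : ℕ} (hn : 4 ≤ n) (a b c : Fin n)
    (ha : (a:ℕ) < n - 2)
    (hb : n - 2 ≤ (b:ℕ)) (hc : n - 2 ≤ (c:ℕ)) (hbc : (b:ℕ) ≠ (c:ℕ)) :
    ∃ x, ftri n hn x = {a, b, c} := by
  refine ⟨.inr (.inr ⟨(a:ℕ), by omega⟩), ?_⟩
  have hb' := b.2; have hc' := c.2
  ext v
  simp only [ftri, Finset.mem_insert, Finset.mem_singleton, Fin.ext_iff, Fin.val_mk]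
  omega

lemma ftri_perm {n : ℕ} (a b c : Fin n) (p q r : Fin n)
    (h : ∀ v : Fin n, (v = a ∨ v = b ∨ v = c) ↔ (v = p ∨ v = q ∨ v = r)) :
    ({a, b, c} : Finset (Fin n)) = {p, q, r} := by
  ext v
  simp only [Finset.mem_insert, Finset.mem_singleton]
  exact h v

lemma ftri_forward (n : ℕ) (hn : 4 ≤ n) (s : Finset (Fin n))
    (hs : (Fgraph n).IsNClique 3 s) : ∃ x, ftri n hn x = s := by
  obtain ⟨a, b, c, hab, hac, hbc, rfl⟩ := SimpleGraph.is3Clique_iff.mp hs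
  rw [Fgraph_adj_iff'] at hab hac hbc
  have ha2 := a.2; have hb2 := b.2; have hc2 := c.2
  by_cases hA : (a:ℕ) < n - 2 <;> by_cases hB : (b:ℕ) < n - 2 <;>
    by_cases hC : (c:ℕ) < n - 2
  · exfalso; omega
  · have hc' : (c:ℕ) = n-2 ∨ (c:ℕ) = n-1 := by omega
    rcases (by omega : (b:ℕ) = (a:ℕ)+1 ∨ (a:ℕ) = (b:ℕ)+1) with h | h
    · exact ftri_helper1 hn a b c h (by omega) hc'
    · obtain ⟨x, hx⟩ := ftri_helper1 hn b a c h (by omega) hc'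
      exact ⟨x, hx.trans (ftri_perm b a c a b c
        (fun v => by constructor <;> rintro (rfl|rfl|rfl) <;> simp))⟩
  · have hb' : (b:ℕ) = n-2 ∨ (b:ℕ) = n-1 := by omega
    rcases (by omega : (c:ℕ) = (a:ℕ)+1 ∨ (a:ℕ) = (c:ℕ)+1) with h | h
    · obtain ⟨x, hx⟩ := ftri_helper1 hn a c b h (by omega) hb'
      exact ⟨x, hx.trans (ftri_perm a c b a b c
        (fun v => by constructor <;> rintro (rfl|rfl|rfl) <;> simp))⟩
    · obtain ⟨x, hx⟩ := ftri_helper1 hn c a b h (by omega) hb'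
      exact ⟨x, hx.trans (ftri_perm c a b a b c
        (fun v => by constructor <;> rintro (rfl|rfl|rfl) <;> simp))⟩
  · exact ftri_helper2 hn a b c hA (by omega) (by omega) (by omega)
  · have ha' : (a:ℕ) = n-2 ∨ (a:ℕ) = n-1 := by omega
    rcases (by omega : (c:ℕ) = (b:ℕ)+1 ∨ (b:ℕ) = (c:ℕ)+1) with h | h
    · obtain ⟨x, hx⟩ := ftri_helper1 hn b c a h (by omega) ha'
      exact ⟨x, hx.trans (ftri_perm b c a a b c
        (fun v => by constructor <;> rintro (rfl|rfl|rfl) <;> simp))⟩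
    · obtain ⟨x, hx⟩ := ftri_helper1 hn c b a h (by omega) ha'
      exact ⟨x, hx.trans (ftri_perm c b a a b c
        (fun v => by constructor <;> rintro (rfl|rfl|rfl) <;> simp))⟩
  · obtain ⟨x, hx⟩ := ftri_helper2 hn b a c hB (by omega) (by omega) (by omega)
    exact ⟨x, hx.trans (ftri_perm b a c a b c
      (fun v => by constructor <;> rintro (rfl|rfl|rfl) <;> simp))⟩
  · obtain ⟨x, hx⟩ := ftri_helper2 hn c a b hC (by omega) (by omega) (by omega)
    exact ⟨x, hx.trans (ftri_perm c a b a b c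
      (fun v => by constructor <;> rintro (rfl|rfl|rfl) <;> simp))⟩
  · exfalso; omega

end TriangleCountAux

/-- For `n ≥ 4`, the graph `Fₙ` contains exactly `3n - 8` triangles. -/
theorem triangleCount_Fgraph (n : ℕ) (hn : 4 ≤ n) :
    triangleCount (Fgraph n) = 3 * n - 8 := by
  have hset : {s : Finset (Fin n) | (Fgraph n).IsNClique 3 s}
      = ↑(Finset.univ.image (ftri n hn)) := by
    ext s
    simp only [Set.mem_setOf_eq, Finset.coe_image, Finset.coe_univ, Set.image_univ,
      Set.mem_range]
    constructor
    · exact ftri_forward n hn s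
    · rintro ⟨x, rfl⟩
      exact ftri_isClique n hn x
  rw [triangleCount, hset, Set.ncard_coe_finset,
    Finset.card_image_of_injective _ (ftri_injective n hn)]
  simp only [Finset.card_univ, Fintype.card_sum, Fintype.card_fin]
  omega
end

section
/- In a planar graph G, if v has degree 3 with neighborhood {x₁,x₂,x₃} inducing a triangle and some vertex u ≠ v is adjacent to all of x₁, x₂, x₃, then each of the three regions determined by u and the triangle contains at most one vertex y adjacent to u and to both endpoints of the corresponding triangle edge; i.e., there are at most 3 star edges with respect to v. -/
open SimpleGraph Finset

variable {V W : Type*}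

/-! If two vertices `y ≠ y'` outside `{v, x₁, x₂, x₃}` were adjacent to `u` and to the same two
triangle vertices `a, b`, then, with `c` the third triangle vertex, `{a, b, u}` and `{y, y', v}`
would be the sides of a `K₃,₃` all of whose edges are edges of `G`, except `uv`, which is realised
by the path `u — c — v`. A planar graph contains no subdivided `K₃,₃`, so each of the three pairs
`a, b` accounts for at most one star edge. -/

namespace SubdivEmb

variable {H : SimpleGraph W} {G : SimpleGraph V} {f : W ↪ V} {p₀ q₀ : W} {c : V}

theorem adj_detour_of_not_adj
    (hadj : ∀ p q, H.Adj p q → s(p, q) ≠ s(p₀, q₀) → G.Adj (f p) (f q))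
    (hp₀ : G.Adj (f p₀) c) (hq₀ : G.Adj c (f q₀)) {p q : W} (hpq : H.Adj p q)
    (hn : ¬G.Adj (f p) (f q)) : s(p, q) = s(p₀, q₀) ∧ G.Adj (f p) c ∧ G.Adj c (f q) := by
  have hs : s(p, q) = s(p₀, q₀) := by_contra fun h => hn (hadj p q hpq h)
  refine ⟨hs, ?_⟩
  rcases Sym2.eq_iff.1 hs with ⟨rfl, rfl⟩ | ⟨rfl, rfl⟩
  · exact ⟨hp₀, hq₀⟩
  · exact ⟨hq₀.symm, hp₀.symm⟩

open Classical in
noncomputable def detourWalk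
    (hadj : ∀ p q, H.Adj p q → s(p, q) ≠ s(p₀, q₀) → G.Adj (f p) (f q))
    (hp₀ : G.Adj (f p₀) c) (hq₀ : G.Adj c (f q₀)) (p q : W) (hpq : H.Adj p q) :
    G.Walk (f p) (f q) :=
  if h : G.Adj (f p) (f q) then .cons h .nil
  else
    have hd := adj_detour_of_not_adj hadj hp₀ hq₀ hpq h
    .cons hd.2.1 (.cons hd.2.2 .nil)

theorem mem_support_detourWalk
    (hadj : ∀ p q, H.Adj p q → s(p, q) ≠ s(p₀, q₀) → G.Adj (f p) (f q))
    (hp₀ : G.Adj (f p₀) c) (hq₀ : G.Adj c (f q₀)) {p q : W} (hpq : H.Adj p q) {x : V}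
    (hx : x ∈ (detourWalk hadj hp₀ hq₀ p q hpq).support) :
    (∃ w, (w = p ∨ w = q) ∧ x = f w) ∨ x = c ∧ s(p, q) = s(p₀, q₀) := by
  unfold detourWalk at hx
  split_ifs at hx with h
  · simp only [Walk.support_cons, Walk.support_nil, List.mem_cons, List.not_mem_nil,
      or_false] at hx
    rcases hx with rfl | rfl <;> simp
  · have hs := (adj_detour_of_not_adj hadj hp₀ hq₀ hpq h).1
    simp only [Walk.support_cons, Walk.support_nil, List.mem_cons, List.not_mem_nil,
      or_false] at hx
    rcases hx with rfl | rfl | rfl <;> simp [hs]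

theorem detourWalk_isPath
    (hadj : ∀ p q, H.Adj p q → s(p, q) ≠ s(p₀, q₀) → G.Adj (f p) (f q))
    (hp₀ : G.Adj (f p₀) c) (hq₀ : G.Adj c (f q₀)) (hc : c ∉ Set.range f) (p q : W)
    (hpq : H.Adj p q) : (detourWalk hadj hp₀ hq₀ p q hpq).IsPath := by
  have hne : f p ≠ f q := f.injective.ne hpq.ne
  have hcp : f p ≠ c := fun h => hc ⟨p, h⟩
  have hcq : c ≠ f q := fun h => hc ⟨q, h.symm⟩
  unfold detourWalk
  split_ifs <;> simp [Walk.cons_isPath_iff, hne, hcp, hcq]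

noncomputable def ofDetour
    (hadj : ∀ p q, H.Adj p q → s(p, q) ≠ s(p₀, q₀) → G.Adj (f p) (f q))
    (hp₀ : G.Adj (f p₀) c) (hq₀ : G.Adj c (f q₀)) (hc : c ∉ Set.range f) : SubdivEmb H G where
  branch := f
  walk := detourWalk hadj hp₀ hq₀
  walk_isPath := detourWalk_isPath hadj hp₀ hq₀ hc
  branch_mem p q hpq w hw := by
    rcases mem_support_detourWalk hadj hp₀ hq₀ hpq hw with ⟨w', hw', h⟩ | ⟨h, -⟩
    · exact f.injective h ▸ hw'
    · exact absurd ⟨w, h⟩ hc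
  disjoint p q r s hpq hrs hne x hx₁ hx₂ := by
    rcases mem_support_detourWalk hadj hp₀ hq₀ hpq hx₁ with ⟨w, hw, rfl⟩ | ⟨rfl, h₁⟩ <;>
      rcases mem_support_detourWalk hadj hp₀ hq₀ hrs hx₂ with ⟨w', hw', h⟩ | ⟨h, h₂⟩
    · exact ⟨w, hw, f.injective h ▸ hw', rfl⟩
    · exact absurd ⟨w, h⟩ hc
    · exact absurd ⟨w', h.symm⟩ hc
    · exact absurd (h₁.trans h₂.symm) hne

end SubdivEmb

theorem subsingleton_of_isEmpty_subdivEmb_K33 {G : SimpleGraph V}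
    (hK33 : IsEmpty (SubdivEmb (completeBipartiteGraph (Fin 3) (Fin 3)) G)) {a b c u v : V}
    (hab : a ≠ b) (hua : u ≠ a) (hub : u ≠ b) (hca : c ≠ a) (hcb : c ≠ b)
    (huv : u ≠ v) (hav : G.Adj a v) (hbv : G.Adj b v)
    (huc : G.Adj u c) (hcv : G.Adj c v) :
    {y | y ≠ v ∧ y ≠ c ∧ G.Adj u y ∧ G.Adj y a ∧ G.Adj y b}.Subsingleton := by
  rintro y ⟨hyv, hyc, huy, hya, hyb⟩ y' ⟨hy'v, hy'c, huy', hy'a, hy'b⟩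
  by_contra hyy
  have hf : Function.Injective (Sum.elim ![a, b, u] ![y, y', v]) := by
    have := hav.ne; have := hbv.ne; have := hya.ne; have := hyb.ne; have := hy'a.ne
    have := hy'b.ne; have := huy.ne; have := huy'.ne
    rintro (i | i) (j | j) h <;> fin_cases i <;> fin_cases j <;> simp_all [eq_comm]
  refine hK33.false
    (SubdivEmb.ofDetour (f := ⟨_, hf⟩) (p₀ := .inl 2) (q₀ := .inr 2) ?_ huc hcv ?_)
  · rintro (i | i) (j | j) hpq hne <;> simp only [completeBipartiteGraph_adj] at hpq <;>
      fin_cases i <;> fin_cases j <;> simp_all [adj_comm]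
  · have := huc.ne; have := hcv.ne
    rintro ⟨i | i, h⟩ <;> fin_cases i <;> simp_all [eq_comm]

theorem Set.ncard_le_three_of_subset_union {α : Type*} {s t₁ t₂ t₃ : Set α}
    (hs : s ⊆ t₁ ∪ t₂ ∪ t₃) (h₁ : t₁.Subsingleton) (h₂ : t₂.Subsingleton)
    (h₃ : t₃.Subsingleton) : s.ncard ≤ 3 :=
  have := h₁.finite.to_subtype; have := h₂.finite.to_subtype; have := h₃.finite.to_subtype
  calc s.ncard ≤ (t₁ ∪ t₂ ∪ t₃).ncard := Set.ncard_le_ncard hs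
    _ ≤ t₁.ncard + t₂.ncard + t₃.ncard :=
      (Set.ncard_union_le _ _).trans (by gcongr; exact Set.ncard_union_le _ _)
    _ ≤ 1 + 1 + 1 := by gcongr <;> exact Set.ncard_le_one_iff_subsingleton.2 ‹_›

theorem star_edges_le_three_general {V : Type*}
    (G : SimpleGraph V) (hG : IsPlanar G) (v x₁ x₂ x₃ u : V)
    (h12 : x₁ ≠ x₂) (h13 : x₁ ≠ x₃) (h23 : x₂ ≠ x₃)
    (hN : G.neighborSet v = {x₁, x₂, x₃})
    (huv : u ≠ v) (hu1 : G.Adj u x₁) (hu2 : G.Adj u x₂) (hu3 : G.Adj u x₃) :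
    {y : V | y ∉ ({v, x₁, x₂, x₃} : Set V) ∧ G.Adj u y ∧
        ((G.Adj y x₁ ∧ G.Adj y x₂) ∨ (G.Adj y x₁ ∧ G.Adj y x₃) ∨
          (G.Adj y x₂ ∧ G.Adj y x₃))}.ncard ≤ 3 := by
  have hv : ∀ x ∈ ({x₁, x₂, x₃} : Set V), G.Adj x v := fun x hx =>
    G.adj_symm (by rwa [← hN] at hx)
  have hv1 := hv x₁ (by simp); have hv2 := hv x₂ (by simp); have hv3 := hv x₃ (by simp)
  refine Set.ncard_le_three_of_subset_union ?_
    (subsingleton_of_isEmpty_subdivEmb_K33 hG.2 h12 hu1.ne hu2.ne h13.symm h23.symm huv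
      hv1 hv2 hu3 hv3)
    (subsingleton_of_isEmpty_subdivEmb_K33 hG.2 h13 hu1.ne hu3.ne h12.symm h23 huv
      hv1 hv3 hu2 hv2)
    (subsingleton_of_isEmpty_subdivEmb_K33 hG.2 h23 hu2.ne hu3.ne h12 h13 huv
      hv2 hv3 hu1 hv1)
  rintro y ⟨hy, huy, hya⟩
  simp only [Set.mem_insert_iff, Set.mem_singleton_iff, not_or] at hy
  simp only [Set.mem_union, Set.mem_ofPred_eq]
  tauto

/-- In a planar graph, if `v` has degree 3 with neighborhood
`{x₁,x₂,x₃}` inducing a triangle and `u ≠ v` is adjacent to all of `x₁,x₂,x₃`,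
then there are at most 3 star edges with respect to `v`: at most 3 vertices
`y ∉ {v,x₁,x₂,x₃}` adjacent to `u` and to at least two of `x₁,x₂,x₃`. -/
theorem star_edges_le_three {V : Type*} [Fintype V]
    (G : SimpleGraph V) (hG : IsPlanar G) (v x₁ x₂ x₃ u : V)
    (h12 : x₁ ≠ x₂) (h13 : x₁ ≠ x₃) (h23 : x₂ ≠ x₃)
    (hN : G.neighborSet v = {x₁, x₂, x₃})
    (ha12 : G.Adj x₁ x₂) (ha13 : G.Adj x₁ x₃) (ha23 : G.Adj x₂ x₃)
    (huv : u ≠ v) (hu1 : G.Adj u x₁) (hu2 : G.Adj u x₂) (hu3 : G.Adj u x₃) :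
    {y : V | y ∉ ({v, x₁, x₂, x₃} : Set V) ∧ G.Adj u y ∧
        ((G.Adj y x₁ ∧ G.Adj y x₂) ∨ (G.Adj y x₁ ∧ G.Adj y x₃) ∨
          (G.Adj y x₂ ∧ G.Adj y x₃))}.ncard ≤ 3 :=
  star_edges_le_three_general G hG v x₁ x₂ x₃ u h12 h13 h23 hN huv hu1 hu2 hu3
end
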